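/- Let X and Y be identically distributed real random variables with finite positive variance whose common CDF F is continuous and strictly increasing. If (X,Y) ∈ IC_r for some r ∈ [-1,1], then 0 ≤ r ≤ 1. -/

import Mathlib

/-!
Test invariance of the correlation on the indicators `g = 1_{(-∞, t]}`. With `p = F(t)`,
`Corr(g(X), g(Y)) = (P(X ≤ t, Y ≤ t) - p²) / (p (1 - p)) ≥ -p / (1 - p)`, and strict monotonicity
of `F` keeps `0 < p < 1`, so each such `g` is admissible. Hence `r ≥ -F(t) / (1 - F(t))` for every
`t`, and letting `t → -∞` gives `r ≥ 0`.
-/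

open MeasureTheory ProbabilityTheory

variable {Ω : Type*} [MeasurableSpace Ω]

noncomputable def cov (μ : Measure Ω) (X Y : Ω → ℝ) : ℝ :=
  ∫ ω, (X ω - ∫ a, X a ∂μ) * (Y ω - ∫ a, Y a ∂μ) ∂μ

noncomputable def corr (μ : Measure Ω) (X Y : Ω → ℝ) : ℝ :=
  cov μ X Y / Real.sqrt (variance X μ * variance Y μ)

def Admissible (μ : Measure Ω) (X Y : Ω → ℝ) (g : ℝ → ℝ) : Prop :=
  Measurable g ∧ MemLp (g ∘ X) 2 μ ∧ MemLp (g ∘ Y) 2 μ ∧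
    0 < variance (g ∘ X) μ ∧ 0 < variance (g ∘ Y) μ

def IC (μ : Measure Ω) (X Y : Ω → ℝ) (r : ℝ) : Prop :=
  corr μ X Y = r ∧ ∀ g : ℝ → ℝ, Admissible μ X Y g → corr μ (g ∘ X) (g ∘ Y) = r

open Filter Topology Set

lemma memLp_indicator_one {μ : Measure Ω} [IsFiniteMeasure μ] {A : Set Ω} (hA : MeasurableSet A)
    (p : ENNReal) : MemLp (A.indicator (1 : Ω → ℝ)) p μ :=
  memLp_indicator_const p hA (1 : ℝ) (by simp)

section

variable {μ : Measure Ω} [IsProbabilityMeasure μ] {A B : Set Ω}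

lemma covariance_indicator_one (hA : MeasurableSet A) (hB : MeasurableSet B) :
    cov[A.indicator 1, B.indicator 1; μ] = μ.real (A ∩ B) - μ.real A * μ.real B := by
  rw [covariance_eq_sub (memLp_indicator_one hA 2) (memLp_indicator_one hB 2),
    ← inter_indicator_one, integral_indicator_one (hA.inter hB), integral_indicator_one hA,
    integral_indicator_one hB]

lemma variance_indicator_one (hA : MeasurableSet A) :
    Var[A.indicator 1; μ] = μ.real A * (1 - μ.real A) := by
  rw [← covariance_self ((measurable_one.indicator hA).aemeasurable),
    covariance_indicator_one hA hA, Set.inter_self]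
  ring

lemma neg_div_one_sub_le_corr_indicator_one (hA : MeasurableSet A) (hB : MeasurableSet B)
    (hAB : μ.real A = μ.real B) :
    -μ.real A / (1 - μ.real A) ≤ corr μ (A.indicator 1) (B.indicator 1) := by
  set p := μ.real A
  have hvar : 0 ≤ p * (1 - p) := mul_nonneg measureReal_nonneg (sub_nonneg.2 measureReal_le_one)
  have hcov : -(p * p) ≤ cov μ (A.indicator 1) (B.indicator 1) := by
    rw [show cov μ _ _ = cov[A.indicator 1, B.indicator 1; μ] from rfl,
      covariance_indicator_one hA hB, ← hAB]
    linarith [measureReal_nonneg (μ := μ) (s := A ∩ B)]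
  rw [corr, variance_indicator_one hA, variance_indicator_one hB, ← hAB,
    Real.sqrt_mul_self hvar]
  rcases eq_or_ne p 0 with hp | hp
  · simp [hp]
  · calc -p / (1 - p) = -(p * p) / (p * (1 - p)) := by
          rw [neg_mul_eq_mul_neg, mul_div_mul_left _ _ hp]
      _ ≤ _ := div_le_div_of_nonneg_right hcov hvar

lemma tendsto_measureReal_le_atBot {X : Ω → ℝ} (hX : AEMeasurable X μ) :
    Tendsto (fun t ↦ μ.real {ω | X ω ≤ t}) atBot (𝓝 0) := by
  have := Measure.isProbabilityMeasure_map hX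
  refine (tendsto_cdf_atBot (μ := μ.map X)).congr fun t ↦ ?_
  rw [cdf_eq_real, map_measureReal_apply_of_aemeasurable hX measurableSet_Iic]
  rfl

lemma IC.neg_div_one_sub_le {X Y : Ω → ℝ} {r : ℝ} (hIC : IC μ X Y r) (hX : Measurable X)
    (hY : Measurable Y) {s : Set ℝ} (hs : MeasurableSet s) (hXY : μ (X ⁻¹' s) = μ (Y ⁻¹' s))
    (hs0 : 0 < μ.real (X ⁻¹' s)) (hs1 : μ.real (X ⁻¹' s) < 1) :
    -μ.real (X ⁻¹' s) / (1 - μ.real (X ⁻¹' s)) ≤ r := by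
  have hcomp (Z : Ω → ℝ) : s.indicator (1 : ℝ → ℝ) ∘ Z = (Z ⁻¹' s).indicator 1 :=
    funext fun _ ↦ (indicator_comp_right Z).symm
  have hXYreal : μ.real (X ⁻¹' s) = μ.real (Y ⁻¹' s) := by
    rw [measureReal_def, hXY, measureReal_def]
  have hvar : 0 < μ.real (X ⁻¹' s) * (1 - μ.real (X ⁻¹' s)) := mul_pos hs0 (sub_pos.2 hs1)
  have hadm : Admissible μ X Y (s.indicator 1) := by
    refine ⟨measurable_one.indicator hs, ?_, ?_, ?_, ?_⟩
    · rw [hcomp]; exact memLp_indicator_one (hX hs) 2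
    · rw [hcomp]; exact memLp_indicator_one (hY hs) 2
    · rwa [hcomp, variance_indicator_one (hX hs)]
    · rwa [hcomp, variance_indicator_one (hY hs), ← hXYreal]
  rw [← hIC.2 _ hadm, hcomp, hcomp]
  exact neg_div_one_sub_le_corr_indicator_one (hX hs) (hY hs) hXYreal

end

theorem ic_nonneg_of_continuous_cdf_general
    (μ : Measure Ω) [IsProbabilityMeasure μ] (X Y : Ω → ℝ)
    (hXm : Measurable X) (hYm : Measurable Y)
    (hident : ∀ x : ℝ, μ {ω | X ω ≤ x} = μ {ω | Y ω ≤ x})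
    (hmono : StrictMono fun x : ℝ => (μ {ω | X ω ≤ x}).toReal)
    (r : ℝ) (hr : r ∈ Set.Icc (-1 : ℝ) 1) (hIC : IC μ X Y r) :
    0 ≤ r ∧ r ≤ 1 := by
  set F : ℝ → ℝ := fun t ↦ μ.real {ω | X ω ≤ t}
  have hF (t : ℝ) : 0 < F t ∧ F t < 1 :=
    ⟨measureReal_nonneg.trans_lt (hmono (sub_one_lt t)),
      (hmono (lt_add_one t)).trans_le measureReal_le_one⟩
  have hbound (t : ℝ) : -F t / (1 - F t) ≤ r :=
    hIC.neg_div_one_sub_le hXm hYm measurableSet_Iic (hident t) (hF t).1 (hF t).2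
  have hF0 : Tendsto F atBot (𝓝 0) := tendsto_measureReal_le_atBot hXm.aemeasurable
  have hlim : Tendsto (fun t ↦ -F t / (1 - F t)) atBot (𝓝 0) := by
    have h1F : Tendsto (fun t ↦ 1 - F t) atBot (𝓝 (1 - 0)) := tendsto_const_nhds.sub hF0
    have := hF0.neg.div h1F (by norm_num)
    rwa [neg_zero, zero_div] at this
  exact ⟨le_of_tendsto' hlim hbound, hr.2⟩

/-- If `X, Y` are identically distributed with a continuous, strictly
increasing common CDF, and `(X,Y) ∈ IC_r` for some `r ∈ [-1,1]`, then `0 ≤ r ≤ 1`. -/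
theorem ic_nonneg_of_continuous_cdf
    (μ : Measure Ω) [IsProbabilityMeasure μ] (X Y : Ω → ℝ)
    (hXm : Measurable X) (hYm : Measurable Y)
    (hX2 : MemLp X 2 μ) (hY2 : MemLp Y 2 μ)
    (hvX : 0 < variance X μ) (hvY : 0 < variance Y μ)
    (hident : ∀ x : ℝ, μ {ω | X ω ≤ x} = μ {ω | Y ω ≤ x})
    (hcont : Continuous fun x : ℝ => (μ {ω | X ω ≤ x}).toReal)
    (hmono : StrictMono fun x : ℝ => (μ {ω | X ω ≤ x}).toReal)
    (r : ℝ) (hr : r ∈ Set.Icc (-1 : ℝ) 1) (hIC : IC μ X Y r) :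
    0 ≤ r ∧ r ≤ 1 :=
  ic_nonneg_of_continuous_cdf_general μ X Y hXm hYm hident hmono r hr hIC
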